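/- Let G be a connected reductive group with Borel B and maximal torus H, and λ ∈ H a regular semisimple element. The preimage of the G-conjugacy class 𝒪 of λ under the group Grothendieck–Springer map G ×^B B → G is a degree |W| covering of 𝒪, where W is the Weyl group. -/

import Mathlib

/-!
The columns of `u` form an eigenbasis of `x = u λ u⁻¹` with the pairwise distinct eigenvalues
`d i`, so it suffices to count the complete flags invariant under an endomorphism `f` with such
an eigenbasis `b`. Each coordinate projection `v ↦ (b.repr v i) • b i` is a polynomial in `f`
(the Lagrange basis polynomial of the eigenvalues), so an `f`-invariant subspace is spanned by
the basis vectors it contains. Invariant subspaces are therefore exactly the spans of subsets of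
the basis, invariant complete flags are maximal chains of subsets of `Fin m`, and such a chain
is the same as an ordering of `Fin m`, i.e. a permutation.
-/

open Module Polynomial Finset Submodule Matrix

section Basis

variable {R M ι : Type*}

lemma Module.Basis.span_image_le_span_image_iff [Semiring R] [Nontrivial R] [AddCommMonoid M]
    [Module R M] (b : Basis ι R M) {s t : Set ι} :
    span R (b '' s) ≤ span R (b '' t) ↔ s ⊆ t :=
  ⟨fun h _ hi => b.self_mem_span_image.mp (h (b.self_mem_span_image.mpr hi)),
    fun h => span_mono (Set.image_mono h)⟩

lemma Module.Basis.finrank_span_image [Ring R] [Nontrivial R] [StrongRankCondition R]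
    [AddCommGroup M] [Module R M] (b : Basis ι R M) (s : Finset ι) :
    finrank R (span R (b '' s)) = #s := by
  rw [Set.image_eq_range, ← Fintype.card_coe s]
  exact finrank_span_eq_card (b.linearIndependent.comp _ Subtype.val_injective)

end Basis

section LinearAlgebra

variable {k V ι : Type*} [Field k] [AddCommGroup V] [Module k V]

namespace Module.End

variable {f : End k V} {b : Basis ι k V} {d : ι → k}

lemma span_basis_image_mem_invtSubmodule (hb : ∀ i, f (b i) = d i • b i) (s : Set ι) :
    span k (b '' s) ∈ f.invtSubmodule := by
  rw [mem_invtSubmodule_iff_map_le, map_span, span_le]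
  rintro _ ⟨_, ⟨i, hi, rfl⟩, rfl⟩
  rw [hb]
  exact smul_mem _ _ (subset_span ⟨i, hi, rfl⟩)

variable [Fintype ι] [DecidableEq ι]

lemma aeval_lagrangeBasis_apply (hb : ∀ i, f (b i) = d i • b i) (hd : Function.Injective d)
    (i : ι) (v : V) : aeval f (Lagrange.basis univ d i) v = b.repr v i • b i := by
  conv_lhs => rw [← b.sum_repr v]
  simp only [map_sum, map_smul, aeval_apply_of_mem_apply_eq_smul (hb _), smul_smul]
  rw [Finset.sum_eq_single i]
  · simp [Lagrange.eval_basis_self hd.injOn (mem_univ i)]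
  · intro j _ hji
    simp [Lagrange.eval_basis_of_ne hji.symm (mem_univ j)]
  · simp

lemma basis_mem_of_repr_ne_zero (hb : ∀ i, f (b i) = d i • b i) (hd : Function.Injective d)
    {p : Submodule k V} (hp : p ∈ f.invtSubmodule) {v : V} (hv : v ∈ p) {i : ι}
    (hvi : b.repr v i ≠ 0) : b i ∈ p := by
  have := aeval_apply_smul_mem_of_le_comap hv (Lagrange.basis univ d i) f hp
  rwa [aeval_lagrangeBasis_apply hb hd, p.smul_mem_iff hvi] at this

lemma eq_span_basis_of_mem_invtSubmodule (hb : ∀ i, f (b i) = d i • b i)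
    (hd : Function.Injective d) {p : Submodule k V} (hp : p ∈ f.invtSubmodule) :
    p = span k (b '' {i | b i ∈ p}) := by
  refine le_antisymm (fun v hv => b.mem_span_image.mpr fun i hi => ?_) ?_
  · exact basis_mem_of_repr_ne_zero hb hd hp hv (Finsupp.mem_support_iff.mp hi)
  · exact span_le.mpr (by rintro _ ⟨i, hi, rfl⟩; exact hi)

open scoped Classical in
noncomputable def orderIsoInvtSubmoduleOfEigenbasis (hb : ∀ i, f (b i) = d i • b i)
    (hd : Function.Injective d) : Finset ι ≃o f.invtSubmodule where
  toFun s := ⟨span k (b '' s), span_basis_image_mem_invtSubmodule hb s⟩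
  invFun p := univ.filter (b · ∈ (p : Submodule k V))
  left_inv s := by ext; simp
  right_inv p := Subtype.ext <| by simpa using (eq_span_basis_of_mem_invtSubmodule hb hd p.2).symm
  map_rel_iff' := by simp [b.span_image_le_span_image_iff]

lemma finrank_orderIsoInvtSubmoduleOfEigenbasis_apply (hb : ∀ i, f (b i) = d i • b i)
    (hd : Function.Injective d) (s : Finset ι) :
    finrank k (orderIsoInvtSubmoduleOfEigenbasis hb hd s : Submodule k V) = #s :=
  b.finrank_span_image s

end Module.End

end LinearAlgebra

section Chains

variable {ι : Type*} [DecidableEq ι] {m : ℕ}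

abbrev FinsetChain (ι : Type*) (m : ℕ) :=
  {G : Fin (m + 1) → Finset ι // Monotone G ∧ ∀ i, #(G i) = i}

def initialImage (e : Fin m → ι) (i : Fin (m + 1)) : Finset ι :=
  (univ.filter fun j : Fin m => j.castSucc < i).image e

@[simp]
lemma initialImage_zero (e : Fin m → ι) : initialImage e 0 = ∅ := by
  simp [initialImage]

lemma initialImage_succ (e : Fin m → ι) (j : Fin m) :
    initialImage e j.succ = insert (e j) (initialImage e j.castSucc) := by
  rw [initialImage, initialImage, ← image_insert]
  congr 1
  ext j'
  simp [Fin.castSucc_lt_succ_iff, le_iff_lt_or_eq, or_comm]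

lemma initialImage_last (e : Fin m → ι) : initialImage e (Fin.last m) = univ.image e := by
  simp [initialImage, Fin.castSucc_lt_last]

lemma monotone_initialImage (e : Fin m → ι) : Monotone (initialImage e) :=
  fun _ _ h => image_subset_image fun _ hj => by
    simp only [mem_filter, mem_univ, true_and] at hj ⊢
    exact hj.trans_le h

lemma apply_notMem_initialImage_castSucc {e : Fin m → ι} (he : Function.Injective e)
    (j : Fin m) : e j ∉ initialImage e j.castSucc := by
  simp [initialImage, he.eq_iff]

lemma card_initialImage {e : Fin m → ι} (he : Function.Injective e) (i : Fin (m + 1)) :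
    #(initialImage e i) = i := by
  induction i using Fin.induction with
  | zero => simp
  | succ j ih =>
    rw [initialImage_succ, card_insert_of_notMem (apply_notMem_initialImage_castSucc he j), ih]
    simp

def chainOfEmbedding (e : Fin m ↪ ι) : FinsetChain ι m :=
  ⟨initialImage e, monotone_initialImage e, card_initialImage e.injective⟩

lemma chainOfEmbedding_injective :
    Function.Injective (chainOfEmbedding : (Fin m ↪ ι) → FinsetChain ι m) := by
  intro e e' h
  have h' (i) : initialImage e i = initialImage e' i := congrFun (congrArg Subtype.val h) i
  ext j
  have hsucc := h' j.succ
  rw [initialImage_succ, initialImage_succ, ← h' j.castSucc] at hsucc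
  exact (insert_inj (apply_notMem_initialImage_castSucc e.injective j)).mp hsucc

lemma chainOfEmbedding_surjective :
    Function.Surjective (chainOfEmbedding : (Fin m ↪ ι) → FinsetChain ι m) := by
  rintro ⟨G, hG, hcard⟩
  have hstep (j : Fin m) : ∃ a ∉ G j.castSucc, insert a (G j.castSucc) = G j.succ :=
    exists_eq_insert_iff.mpr ⟨hG (Fin.castSucc_le_succ j), by simp [hcard]⟩
  choose a _ ha using hstep
  have hG_eq : G = initialImage a := by
    funext i
    induction i using Fin.induction with
    | zero => simpa using hcard 0
    | succ j ih => rw [← ha, initialImage_succ, ih]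
  have ha_inj : Function.Injective a := by
    have hlast := hcard (Fin.last m)
    rw [hG_eq, initialImage_last] at hlast
    simpa using card_image_iff.mp (hlast.trans (card_fin m).symm)
  exact ⟨⟨a, ha_inj⟩, Subtype.ext hG_eq.symm⟩

lemma Nat.card_finsetChain [Fintype ι] :
    Nat.card (FinsetChain ι m) = (Fintype.card ι).descFactorial m := by
  rw [← Nat.card_congr
      (Equiv.ofBijective _ ⟨chainOfEmbedding_injective, chainOfEmbedding_surjective⟩),
    Nat.card_eq_fintype_card, Fintype.card_embedding_eq, Fintype.card_fin]

end Chains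

section Flags

variable {k V ι : Type*} [Field k] [AddCommGroup V] [Module k V]

abbrev InvariantFlag (f : End k V) (m : ℕ) :=
  {F : Fin (m + 1) → Submodule k V //
    Monotone F ∧ (∀ i, finrank k (F i) = (i : ℕ)) ∧ ∀ i, (F i).map f ≤ F i}

variable [Fintype ι] [DecidableEq ι] {f : End k V} {b : Basis ι k V} {d : ι → k} {m : ℕ}

namespace Module.End

noncomputable def invariantFlagEquivFinsetChain (hb : ∀ i, f (b i) = d i • b i)
    (hd : Function.Injective d) : InvariantFlag f m ≃ FinsetChain ι m :=
  let φ := orderIsoInvtSubmoduleOfEigenbasis hb hd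
  { toFun F := ⟨fun i => φ.symm ⟨F.1 i, (mem_invtSubmodule_iff_map_le f).mpr (F.2.2.2 i)⟩,
      fun _ _ h => φ.symm.monotone (F.2.1 h), fun i => by
        rw [← finrank_orderIsoInvtSubmoduleOfEigenbasis_apply hb hd, φ.apply_symm_apply]
        exact F.2.2.1 i⟩
    invFun G := ⟨fun i => φ (G.1 i), fun _ _ h => φ.monotone (G.2.1 h),
      fun i => by rw [finrank_orderIsoInvtSubmoduleOfEigenbasis_apply, G.2.2 i],
      fun i => (mem_invtSubmodule_iff_map_le f).mp (φ (G.1 i)).2⟩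
    left_inv F := by ext; simp
    right_inv G := by ext; simp }

theorem card_invariantFlag_of_eigenbasis (hb : ∀ i, f (b i) = d i • b i)
    (hd : Function.Injective d) :
    Nat.card (InvariantFlag f m) = (Fintype.card ι).descFactorial m := by
  rw [Nat.card_congr (invariantFlagEquivFinsetChain hb hd), Nat.card_finsetChain]

end Module.End

end Flags

lemma Matrix.toLin'_conj_diagonal_mulVec_single {R n : Type*} [CommRing R] [Fintype n]
    [DecidableEq n] (u : (Matrix n n R)ˣ) (d : n → R) (i : n) :
    toLin' ((u : Matrix n n R) * diagonal d * (↑u⁻¹ : Matrix n n R))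
        ((u : Matrix n n R) *ᵥ Pi.single i 1) =
      d i • ((u : Matrix n n R) *ᵥ Pi.single i 1) := by
  rw [toLin'_apply, mulVec_mulVec, Matrix.mul_assoc, Matrix.mul_assoc, Units.inv_mul,
    Matrix.mul_one, ← mulVec_mulVec, ← mulVec_smul]
  congr 1
  ext j
  by_cases h : j = i <;> simp [mulVec_diagonal, h]

theorem stmt11_general {k : Type*} [Field k] {m : ℕ}
    (d : Fin m → k) (hd : Function.Injective d)
    (x : Matrix (Fin m) (Fin m) k)
    (hx : ∃ u : (Matrix (Fin m) (Fin m) k)ˣ,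
      x = (u : Matrix (Fin m) (Fin m) k) * Matrix.diagonal d * (↑u⁻¹ : Matrix (Fin m) (Fin m) k)) :
    Nat.card {F : Fin (m + 1) → Submodule k (Fin m → k) //
        Monotone F ∧ (∀ i, Module.finrank k (F i) = (i : ℕ)) ∧
        ∀ i, (F i).map (Matrix.toLin' x) ≤ F i} =
      Nat.card (Equiv.Perm (Fin m)) := by
  obtain ⟨u, rfl⟩ := hx
  let b := (Pi.basisFun k (Fin m)).map (toLinearEquiv' _ u.invertible)
  have hb (i : Fin m) : toLin' ((u : Matrix (Fin m) (Fin m) k) * diagonal d *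
      (↑u⁻¹ : Matrix (Fin m) (Fin m) k)) (b i) = d i • b i := by
    rw [Basis.map_apply, Pi.basisFun_apply]
    exact toLin'_conj_diagonal_mulVec_single u d i
  refine (Module.End.card_invariantFlag_of_eigenbasis hb hd).trans ?_
  rw [Nat.card_perm, Nat.card_eq_fintype_card, Fintype.card_fin, Nat.descFactorial_self]

/-- (For `G = GL_m` with diagonal torus `H`, Weyl group `W ≅ S_m`.)  Let
`λ = diagonal d ∈ H` be regular semisimple (`d` injective with nonzero entries, i.e. the
centralizer of `λ` in `G` is `H`).  The preimage of the conjugacy class `𝒪` of `λ` under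
the group Grothendieck–Springer map `G ×^B B → G` is a degree `|W|` covering of `𝒪`: the
fiber over any `x ∈ 𝒪` — the set of Borel subgroups (equivalently, complete invariant
flags) containing `x` — has exactly `|W|` points. -/
theorem stmt11 {k : Type*} [Field k] {m : ℕ}
    (d : Fin m → k) (hd : Function.Injective d) (hd0 : ∀ i, d i ≠ 0)
    (x : Matrix (Fin m) (Fin m) k)
    (hx : ∃ u : (Matrix (Fin m) (Fin m) k)ˣ,
      x = (u : Matrix (Fin m) (Fin m) k) * Matrix.diagonal d * (↑u⁻¹ : Matrix (Fin m) (Fin m) k)) :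
    Nat.card {F : Fin (m + 1) → Submodule k (Fin m → k) //
        Monotone F ∧ (∀ i, Module.finrank k (F i) = (i : ℕ)) ∧
        ∀ i, (F i).map (Matrix.toLin' x) ≤ F i} =
      Nat.card (Equiv.Perm (Fin m)) :=
  stmt11_general d hd x hx
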